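/- Define g : ℕ → ℕ by g(0) = 1 and g(h) = g(h−1) + g(h−1)^2 for h ≥ 1, and define n : ℕ → ℕ by n(0) = 0 and n(h) = n(h−1) + g(h−1) + 2·n(h−1)·g(h−1) for h ≥ 1. Then for every d ≥ 1, the number of covering pairs of the Mockingbird lattice M(d) (pairs (s, s') of elements of M(d) such that s' covers s with respect to ≼, i.e., the number of edges of the Hasse diagram of M(d)) equals n(d−1). -/

import Mathlib

/-- Mockingbird terms: the constant `M`, variables `x i`, and applications. -/
inductive MTerm : Type
  | M : MTerm
  | var : ℕ → MTerm
  | app : MTerm → MTerm → MTerm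
  deriving DecidableEq

/-- The one-step rewrite relation `⇒` on Mockingbird terms. -/
inductive Step : MTerm → MTerm → Prop
  | mock (t : MTerm) : Step (MTerm.app MTerm.M t) (MTerm.app t t)
  | left {t1 t1' : MTerm} (t2 : MTerm) :
      Step t1 t1' → Step (MTerm.app t1 t2) (MTerm.app t1' t2)
  | right (t1 : MTerm) {t2 t2' : MTerm} :
      Step t2 t2' → Step (MTerm.app t1 t2) (MTerm.app t1 t2')

/-- `≼`, the reflexive-transitive closure of `⇒`. -/
def MLe : MTerm → MTerm → Prop := Relation.ReflTransGen Step

/-- `≡`, the reflexive-symmetric-transitive closure of `⇒`. -/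
def MEquiv : MTerm → MTerm → Prop := Relation.EqvGen Step

/-- Strict version of `≼`. -/
def MLt (s t : MTerm) : Prop := MLe s t ∧ s ≠ t

/-- Covering relation for `≼`. -/
def MCovBy (s t : MTerm) : Prop := MLt s t ∧ ∀ z, MLt s z → ¬ MLt z t

/-- Duplicative trees: white or black nodes with a list (forest) of children. -/
inductive DTree : Type
  | W : List DTree → DTree
  | B : List DTree → DTree

/-- The one-step relation `⋖` on duplicative forests. -/
inductive DStep : List DTree → List DTree → Prop
  | dup (g : List DTree) : DStep [DTree.W g] [DTree.B (g ++ g)]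
  | white {g g' : List DTree} : DStep g g' → DStep [DTree.W g] [DTree.W g']
  | black {g g' : List DTree} : DStep g g' → DStep [DTree.B g] [DTree.B g']
  | head {t t' : DTree} (f : List DTree) : DStep [t] [t'] → DStep (t :: f) (t' :: f)
  | tail (t : DTree) {f f' : List DTree} : DStep f f' → DStep (t :: f) (t :: f')

/-- `≪`, the reflexive-transitive closure of `⋖`. -/
def DLe : List DTree → List DTree → Prop := Relation.ReflTransGen DStep

/-- The map `fr` from Mockingbird terms to duplicative forests. -/
def fr : MTerm → List DTree
  | MTerm.M => []
  | MTerm.var _ => []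
  | MTerm.app MTerm.M MTerm.M => [DTree.B []]
  | MTerm.app MTerm.M t' => [DTree.W (fr t')]
  | MTerm.app t t' => [DTree.B (fr t ++ fr t')]

mutual
  /-- The pruning map on duplicative trees (returns a forest). -/
  def prT : DTree → List DTree
    | DTree.W g => [DTree.W (prF g)]
    | DTree.B g => prF g
  /-- The pruning map on duplicative forests. -/
  def prF : List DTree → List DTree
    | [] => []
    | t :: f => prT t ++ prF f
end

mutual
  /-- The statistic `mtStat` on duplicative trees. -/
  def mtStat : DTree → ℕ
    | DTree.W g => 2 * ml g
    | DTree.B g => ml g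
  /-- Sum of `mtStat` over the trees of a forest. -/
  def mtsum : List DTree → ℕ
    | [] => 0
    | t :: f => mtStat t + mtsum f
  /-- The statistic `ml` on duplicative forests: `1 - ℓ + Σ mtStat`. -/
  def ml : List DTree → ℕ
    | f => mtsum f + 1 - f.length
end

mutual
  /-- Number of white nodes in a duplicative tree. -/
  def whitesT : DTree → ℕ
    | DTree.W g => 1 + whitesF g
    | DTree.B g => whitesF g
  /-- Number of white nodes in a duplicative forest. -/
  def whitesF : List DTree → ℕ
    | [] => 0
    | t :: f => whitesT t + whitesF f
end

/-- Closed terms: no variables. -/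
def MClosed : MTerm → Prop
  | MTerm.M => True
  | MTerm.var _ => False
  | MTerm.app a b => MClosed a ∧ MClosed b

/-- Degree: number of applications. -/
def deg : MTerm → ℕ
  | MTerm.M => 0
  | MTerm.var _ => 0
  | MTerm.app a b => deg a + deg b + 1

/-- Subterm relation. -/
inductive Subterm : MTerm → MTerm → Prop
  | refl (t : MTerm) : Subterm t t
  | left {s a : MTerm} (b : MTerm) : Subterm s a → Subterm s (MTerm.app a b)
  | right (a : MTerm) {s b : MTerm} : Subterm s b → Subterm s (MTerm.app a b)

/-- The term `r_d`. -/
def rTerm : ℕ → MTerm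
  | 0 => MTerm.M
  | d + 1 => MTerm.app MTerm.M (rTerm d)

/-- Saturated chain from `a` to `b`, given as the list of its elements. -/
def SatChain (a b : MTerm) (c : List MTerm) : Prop :=
  List.Chain' MCovBy c ∧ c.head? = some a ∧ c.getLast? = some b

namespace MockAux

open MTerm

/-! ### A measure strictly increasing along nontrivial steps -/

def mu : MTerm → ℕ
  | MTerm.M => 1
  | MTerm.var _ => 2
  | MTerm.app a b => mu a + mu b

theorem mu_pos : ∀ t, 1 ≤ mu t
  | MTerm.M => le_refl 1
  | MTerm.var _ => by simp [mu]
  | MTerm.app a b => by have := mu_pos a; simp [mu]; omega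

theorem mu_ge_two {t : MTerm} (h : t ≠ MTerm.M) : 2 ≤ mu t := by
  cases t with
  | M => exact absurd rfl h
  | var i => simp [mu]
  | app a b => have := mu_pos a; have := mu_pos b; simp [mu]; omega

theorem step_mu {s t : MTerm} (h : Step s t) : mu s ≤ mu t ∧ (s ≠ t → mu s < mu t) := by
  induction h with
  | mock t =>
    by_cases ht : t = MTerm.M
    · subst ht; exact ⟨le_refl _, fun h => absurd rfl h⟩
    · have h2 := mu_ge_two ht
      constructor
      · simp [mu]; omega
      · intro _; simp [mu]; omega
  | left t2 h ih =>
    constructor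
    · simp [mu]; omega
    · intro hne
      have := ih.2 (fun he => hne (by rw [he]))
      simp [mu]; omega
  | right t1 h ih =>
    constructor
    · simp [mu]; omega
    · intro hne
      have := ih.2 (fun he => hne (by rw [he]))
      simp [mu]; omega

theorem mle_mu {s t : MTerm} (h : MLe s t) : mu s ≤ mu t := by
  induction h with
  | refl => exact le_refl _
  | tail _ hst ih => exact le_trans ih (step_mu hst).1

theorem mle_eq_of_mu {s t : MTerm} (h : MLe s t) (he : mu s = mu t) : s = t := by
  induction h using Relation.ReflTransGen.head_induction_on with
  | refl => rfl
  | head hstep hrest ih =>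
    rename_i a c
    have h1 := step_mu hstep
    have h2 := mle_mu hrest
    by_cases hac : a = c
    · subst hac; exact ih he
    · exact absurd he (by have := h1.2 hac; omega)

theorem mle_antisymm {s t : MTerm} (h1 : MLe s t) (h2 : MLe t s) : s = t :=
  mle_eq_of_mu h1 (le_antisymm (mle_mu h1) (mle_mu h2))

/-! ### Congruence lemmas for `MLe` -/

theorem mle_refl (t : MTerm) : MLe t t := Relation.ReflTransGen.refl

theorem mle_trans {a b c : MTerm} (h1 : MLe a b) (h2 : MLe b c) : MLe a c :=
  Relation.ReflTransGen.trans h1 h2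

theorem mle_appLeft {a a' : MTerm} (b : MTerm) (h : MLe a a') :
    MLe (MTerm.app a b) (MTerm.app a' b) :=
  Relation.ReflTransGen.lift (fun x => MTerm.app x b) (fun _ _ hs => Step.left b hs) _ _ h

theorem mle_appRight (a : MTerm) {b b' : MTerm} (h : MLe b b') :
    MLe (MTerm.app a b) (MTerm.app a b') :=
  Relation.ReflTransGen.lift (fun x => MTerm.app a x) (fun _ _ hs => Step.right a hs) _ _ h

theorem mle_appCongr {a a' b b' : MTerm} (h1 : MLe a a') (h2 : MLe b b') :
    MLe (MTerm.app a b) (MTerm.app a' b') :=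
  mle_trans (mle_appLeft b h1) (mle_appRight a' h2)

theorem no_step_M {t : MTerm} (h : Step MTerm.M t) : False := by cases h

/-! ### The finite set of terms reachable from `rTerm d` -/

def Md : ℕ → Finset MTerm
  | 0 => {MTerm.M}
  | d + 1 => (Md d).image (fun u => MTerm.app MTerm.M u) ∪
      ((Md d ×ˢ Md d).image fun p => MTerm.app p.1 p.2)

theorem mem_Md_succ {d : ℕ} {s : MTerm} :
    s ∈ Md (d + 1) ↔ (∃ u ∈ Md d, s = MTerm.app MTerm.M u) ∨
      (∃ a ∈ Md d, ∃ b ∈ Md d, s = MTerm.app a b) := by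
  simp only [Md, Finset.mem_union, Finset.mem_image, Finset.mem_product, Prod.exists]
  constructor
  · rintro (⟨u, hu, rfl⟩ | ⟨a, b, ⟨ha, hb⟩, rfl⟩)
    · exact Or.inl ⟨u, hu, rfl⟩
    · exact Or.inr ⟨a, ha, b, hb, rfl⟩
  · rintro (⟨u, hu, rfl⟩ | ⟨a, ha, b, hb, rfl⟩)
    · exact Or.inl ⟨u, hu, rfl⟩
    · exact Or.inr ⟨a, b, ⟨ha, hb⟩, rfl⟩

theorem ne_M_of_mem {d : ℕ} {s : MTerm} (hs : s ∈ Md (d + 1)) : s ≠ MTerm.M := by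
  rcases mem_Md_succ.1 hs with ⟨u, _, rfl⟩ | ⟨a, _, b, _, rfl⟩ <;> exact fun h => by cases h

theorem M_not_mem {d : ℕ} : MTerm.M ∉ Md (d + 1) := fun h => ne_M_of_mem h rfl

theorem Md_closed : ∀ {d : ℕ} {s s' : MTerm}, s ∈ Md d → Step s s' → s' ∈ Md d := by
  intro d
  induction d with
  | zero =>
    intro s s' hs hstep
    simp only [Md, Finset.mem_singleton] at hs
    subst hs; exact absurd hstep no_step_M
  | succ d ih =>
    intro s s' hs hstep
    rcases mem_Md_succ.1 hs with ⟨u, hu, rfl⟩ | ⟨a, ha, b, hb, rfl⟩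
    · cases hstep with
      | mock => exact mem_Md_succ.2 (Or.inr ⟨u, hu, u, hu, rfl⟩)
      | left _ h => exact absurd h no_step_M
      | right _ h => exact mem_Md_succ.2 (Or.inl ⟨_, ih hu h, rfl⟩)
    · cases hstep with
      | mock => exact mem_Md_succ.2 (Or.inr ⟨b, hb, b, hb, rfl⟩)
      | left _ h => exact mem_Md_succ.2 (Or.inr ⟨_, ih ha h, b, hb, rfl⟩)
      | right _ h => exact mem_Md_succ.2 (Or.inr ⟨a, ha, _, ih hb h, rfl⟩)

theorem rTerm_mem : ∀ d, rTerm d ∈ Md d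
  | 0 => by simp [Md, rTerm]
  | d + 1 => mem_Md_succ.2 (Or.inl ⟨rTerm d, rTerm_mem d, rfl⟩)

theorem mle_of_mem : ∀ {d : ℕ} {s : MTerm}, s ∈ Md d → MLe (rTerm d) s := by
  intro d
  induction d with
  | zero =>
    intro s hs
    simp only [Md, Finset.mem_singleton] at hs
    subst hs; exact mle_refl _
  | succ d ih =>
    intro s hs
    rcases mem_Md_succ.1 hs with ⟨u, hu, rfl⟩ | ⟨a, ha, b, hb, rfl⟩
    · exact mle_appRight _ (ih hu)
    · exact mle_trans (Relation.ReflTransGen.single (Step.mock (rTerm d)))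
        (mle_appCongr (ih ha) (ih hb))

theorem mem_Md_iff {d : ℕ} {s : MTerm} : s ∈ Md d ↔ MLe (rTerm d) s := by
  constructor
  · exact mle_of_mem
  · intro h
    induction h with
    | refl => exact rTerm_mem d
    | tail _ hstep ih => exact Md_closed ih hstep

/-! ### Structure of `MLe` above elements of `Md (d+1)` -/

theorem mle_app_app {d : ℕ} {a b s : MTerm} (ha : a ∈ Md (d + 1)) (hb : b ∈ Md (d + 1))
    (h : MLe (MTerm.app a b) s) :
    ∃ a' b', s = MTerm.app a' b' ∧ MLe a a' ∧ MLe b b' ∧ a' ∈ Md (d + 1) ∧ b' ∈ Md (d + 1) := by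
  induction h with
  | refl => exact ⟨a, b, rfl, mle_refl _, mle_refl _, ha, hb⟩
  | tail _ hstep ih =>
    obtain ⟨a', b', rfl, h1, h2, ha', hb'⟩ := ih
    cases hstep with
    | mock => exact absurd rfl (ne_M_of_mem ha')
    | left _ h =>
      exact ⟨_, b', rfl, Relation.ReflTransGen.tail h1 h, h2, Md_closed ha' h, hb'⟩
    | right _ h =>
      exact ⟨a', _, rfl, h1, Relation.ReflTransGen.tail h2 h, ha', Md_closed hb' h⟩

theorem mle_app_M {d : ℕ} {u s : MTerm} (hu : u ∈ Md (d + 1)) (h : MLe (MTerm.app MTerm.M u) s) :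
    (∃ u', s = MTerm.app MTerm.M u' ∧ MLe u u' ∧ u' ∈ Md (d + 1)) ∨
    (∃ w a b, s = MTerm.app a b ∧ MLe u w ∧ MLe w a ∧ MLe w b ∧
      a ∈ Md (d + 1) ∧ b ∈ Md (d + 1)) := by
  induction h with
  | refl => exact Or.inl ⟨u, rfl, mle_refl _, hu⟩
  | tail _ hstep ih =>
    rcases ih with ⟨u', rfl, h1, hu'⟩ | ⟨w, a, b, rfl, h1, h2, h3, ha, hb⟩
    · cases hstep with
      | mock => exact Or.inr ⟨u', u', u', rfl, h1, mle_refl _, mle_refl _, hu', hu'⟩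
      | left _ h => exact absurd h no_step_M
      | right _ h =>
        exact Or.inl ⟨_, rfl, Relation.ReflTransGen.tail h1 h, Md_closed hu' h⟩
    · cases hstep with
      | mock => exact absurd rfl (ne_M_of_mem ha)
      | left _ h =>
        exact Or.inr ⟨w, _, b, rfl, h1, Relation.ReflTransGen.tail h2 h, h3,
          Md_closed ha h, hb⟩
      | right _ h =>
        exact Or.inr ⟨w, a, _, rfl, h1, h2, Relation.ReflTransGen.tail h3 h,
          ha, Md_closed hb h⟩

theorem not_mle_app_M {d : ℕ} {a b u : MTerm} (ha : a ∈ Md (d + 1)) (hb : b ∈ Md (d + 1))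
    (h : MLe (MTerm.app a b) (MTerm.app MTerm.M u)) : False := by
  obtain ⟨a', b', he, _, _, ha', _⟩ := mle_app_app ha hb h
  cases he
  exact ne_M_of_mem ha' rfl

/-! ### Covering lemmas -/

theorem cov_white_of_cov {d : ℕ} {u u' : MTerm} (hu : u ∈ Md (d + 1)) (h : MCovBy u u') :
    MCovBy (MTerm.app MTerm.M u) (MTerm.app MTerm.M u') := by
  obtain ⟨⟨hle, hne⟩, hcov⟩ := h
  refine ⟨⟨mle_appRight _ hle, fun he => hne (by injection he)⟩, ?_⟩
  rintro z ⟨hz1, hz2⟩ ⟨hz3, hz4⟩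
  rcases mle_app_M hu hz1 with ⟨w, rfl, hw1, hw⟩ | ⟨w, c, e, rfl, _, _, _, hc, hce⟩
  · rcases mle_app_M hw hz3 with ⟨w', he, hw2, _⟩ | ⟨w', c, e, he, _, _, _, hc, _⟩
    · injection he with _ he'; subst he'
      exact hcov w ⟨hw1, fun h => hz2 (by rw [h])⟩
        ⟨hw2, fun h => hz4 (by rw [h])⟩
    · injection he with he1 _
      exact ne_M_of_mem hc he1.symm
  · exact not_mle_app_M hc hce hz3

theorem cov_of_cov_white {d : ℕ} {u u' : MTerm} (hu : u ∈ Md (d + 1))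
    (h : MCovBy (MTerm.app MTerm.M u) (MTerm.app MTerm.M u')) : MCovBy u u' := by
  obtain ⟨⟨hle, hne⟩, hcov⟩ := h
  rcases mle_app_M hu hle with ⟨w, he, h1, _⟩ | ⟨w, a, b, he, _, _, _, ha, _⟩
  · injection he with _ he'
    subst he'
    refine ⟨⟨h1, fun h => hne (by rw [h])⟩, ?_⟩
    rintro z ⟨hz1, hz2⟩ ⟨hz3, hz4⟩
    exact hcov (MTerm.app MTerm.M z) ⟨mle_appRight _ hz1, fun h => hz2 (by injection h)⟩
      ⟨mle_appRight _ hz3, fun h => hz4 (by injection h)⟩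
  · injection he with he1 _
    exact absurd he1.symm (ne_M_of_mem ha)

theorem cov_cross {d : ℕ} {u : MTerm} (hu : u ∈ Md (d + 1)) :
    MCovBy (MTerm.app MTerm.M u) (MTerm.app u u) := by
  have hneMu : MTerm.app MTerm.M u ≠ MTerm.app u u := by
    intro h; injection h with h1 _; exact ne_M_of_mem hu h1.symm
  refine ⟨⟨Relation.ReflTransGen.single (Step.mock u), hneMu⟩, ?_⟩
  rintro z ⟨hz1, hz2⟩ ⟨hz3, hz4⟩
  rcases mle_app_M hu hz1 with ⟨w, rfl, h1, hw⟩ | ⟨w, a, b, rfl, h1, h2, h3, ha, hb⟩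
  · rcases mle_app_M hw hz3 with ⟨w', he, _, _⟩ | ⟨w', c, e, he, h4, h5, h6, _, _⟩
    · injection he with he1 _; exact ne_M_of_mem hu he1
    · injection he with he1 he2
      have huw : u = w := mle_antisymm h1 (mle_trans h4 (he1 ▸ h5))
      exact hz2 (by rw [← huw])
  · obtain ⟨a', b', he, h4, h5, _, _⟩ := mle_app_app ha hb hz3
    injection he with he1 he2
    have hwu : MLe w u := he1 ▸ (mle_trans h2 h4)
    have huw : u = w := mle_antisymm h1 hwu
    have hau : a = u := mle_antisymm (he1 ▸ h4) (huw ▸ h2)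
    have hbu : b = u := mle_antisymm (he2 ▸ h5) (huw ▸ h3)
    exact hz4 (by rw [hau, hbu])

theorem cross_of_cov {d : ℕ} {u a b : MTerm} (hu : u ∈ Md (d + 1)) (ha : a ∈ Md (d + 1))
    (hb : b ∈ Md (d + 1)) (h : MCovBy (MTerm.app MTerm.M u) (MTerm.app a b)) :
    a = u ∧ b = u := by
  obtain ⟨⟨hle, hne⟩, hcov⟩ := h
  rcases mle_app_M hu hle with ⟨w, he, _, _⟩ | ⟨w, c, e, he, h1, h2, h3, _, _⟩
  · injection he with he1 _
    exact absurd he1 (ne_M_of_mem ha)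
  · injection he with he1 he2
    rw [← he1] at h2
    rw [← he2] at h3
    by_contra hcon
    have hz1 : MLt (MTerm.app MTerm.M u) (MTerm.app u u) :=
      ⟨Relation.ReflTransGen.single (Step.mock u),
        fun h => ne_M_of_mem hu (by injection h with h1 _; exact h1.symm)⟩
    have hz2 : MLe (MTerm.app u u) (MTerm.app a b) :=
      mle_appCongr (mle_trans h1 h2) (mle_trans h1 h3)
    have hzz : MTerm.app u u ≠ MTerm.app a b := by
      intro h; injection h with g1 g2; exact hcon ⟨g1.symm, g2.symm⟩
    exact hcov _ hz1 ⟨hz2, hzz⟩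

theorem cov_app_left {d : ℕ} {a a' b : MTerm} (ha : a ∈ Md (d + 1)) (hb : b ∈ Md (d + 1))
    (h : MCovBy a a') : MCovBy (MTerm.app a b) (MTerm.app a' b) := by
  obtain ⟨⟨hle, hne⟩, hcov⟩ := h
  refine ⟨⟨mle_appLeft b hle, fun he => hne (by injection he)⟩, ?_⟩
  rintro z ⟨hz1, hz2⟩ ⟨hz3, hz4⟩
  obtain ⟨c, e, rfl, h1, h2, hc, heM⟩ := mle_app_app ha hb hz1
  obtain ⟨c', e', he, h3, h4, _, _⟩ := mle_app_app hc heM hz3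
  injection he with he1 he2
  subst he1; subst he2
  obtain rfl : e = b := (mle_antisymm h2 h4).symm
  by_cases hac : a = c
  · exact hz2 (by rw [hac])
  by_cases hca : c = a'
  · exact hz4 (by rw [hca])
  exact hcov c ⟨h1, hac⟩ ⟨h3, hca⟩

theorem cov_app_right {d : ℕ} {a b b' : MTerm} (ha : a ∈ Md (d + 1)) (hb : b ∈ Md (d + 1))
    (h : MCovBy b b') : MCovBy (MTerm.app a b) (MTerm.app a b') := by
  obtain ⟨⟨hle, hne⟩, hcov⟩ := h
  refine ⟨⟨mle_appRight a hle, fun he => hne (by injection he)⟩, ?_⟩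
  rintro z ⟨hz1, hz2⟩ ⟨hz3, hz4⟩
  obtain ⟨c, e, rfl, h1, h2, hc, heM⟩ := mle_app_app ha hb hz1
  obtain ⟨c', e', he, h3, h4, _, _⟩ := mle_app_app hc heM hz3
  injection he with he1 he2
  subst he1; subst he2
  obtain rfl : c = a := (mle_antisymm h1 h3).symm
  by_cases hbe : b = e
  · exact hz2 (by rw [hbe])
  by_cases heb : e = b'
  · exact hz4 (by rw [heb])
  exact hcov e ⟨h2, hbe⟩ ⟨h4, heb⟩

theorem cov_app_inv {d : ℕ} {a b a' b' : MTerm} (ha : a ∈ Md (d + 1)) (hb : b ∈ Md (d + 1))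
    (h : MCovBy (MTerm.app a b) (MTerm.app a' b')) :
    (a = a' ∧ MCovBy b b') ∨ (b = b' ∧ MCovBy a a') := by
  obtain ⟨⟨hle, hne⟩, hcov⟩ := h
  obtain ⟨c, e, he, h1, h2, hc, heM⟩ := mle_app_app ha hb hle
  injection he with he1 he2
  rw [← he1] at h1
  rw [← he2] at h2
  by_cases hab : a = a'
  · left
    refine ⟨hab, ⟨h2, fun hbe => hne (by rw [hab, hbe])⟩, ?_⟩
    rintro z ⟨hz1, hz2⟩ ⟨hz3, hz4⟩
    refine hcov (MTerm.app a z)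
      ⟨mle_appRight a hz1, fun h => hz2 (by injection h)⟩
      ⟨?_, fun h => hz4 (by injection h)⟩
    rw [hab]; exact mle_appRight a' hz3
  · by_cases hbb : b = b'
    · right
      refine ⟨hbb, ⟨h1, hab⟩, ?_⟩
      rintro z ⟨hz1, hz2⟩ ⟨hz3, hz4⟩
      refine hcov (MTerm.app z b)
        ⟨mle_appLeft b hz1, fun h => hz2 (by injection h)⟩
        ⟨?_, fun h => hz4 (by injection h)⟩
      rw [hbb]; exact mle_appLeft b' hz3
    · exact (hcov (MTerm.app a' b)
        ⟨mle_appLeft b h1, fun h => hab (by injection h)⟩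
        ⟨mle_appRight a' h2, fun h => hbb (by injection h)⟩).elim

/-! ### Counting -/

def ESet (d : ℕ) : Set (MTerm × MTerm) :=
  {p | p.1 ∈ Md d ∧ p.2 ∈ Md d ∧ MCovBy p.1 p.2}

theorem ESet_finite (d : ℕ) : (ESet d).Finite := by
  apply Set.Finite.subset (Md d ×ˢ Md d).finite_toSet
  rintro ⟨s, t⟩ ⟨hs, ht, _⟩
  simp only [Finset.coe_product, Set.mem_prod]
  exact ⟨hs, ht⟩

theorem ncard_sprod {α β : Type*} (s : Set α) (t : Set β) :
    (s ×ˢ t).ncard = s.ncard * t.ncard := by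
  rw [← Nat.card_coe_set_eq, ← Nat.card_coe_set_eq, ← Nat.card_coe_set_eq,
    Nat.card_congr (Equiv.Set.prod s t), Nat.card_prod]

theorem ESet_succ_eq (d : ℕ) :
    ESet (d + 2) =
      (fun p : MTerm × MTerm => (MTerm.app MTerm.M p.1, MTerm.app MTerm.M p.2)) '' ESet (d + 1) ∪
      (fun u : MTerm => (MTerm.app MTerm.M u, MTerm.app u u)) '' ↑(Md (d + 1)) ∪
      (fun q : (MTerm × MTerm) × MTerm => (MTerm.app q.1.1 q.2, MTerm.app q.1.2 q.2)) ''
        (ESet (d + 1) ×ˢ ↑(Md (d + 1))) ∪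
      (fun q : MTerm × MTerm × MTerm => (MTerm.app q.1 q.2.1, MTerm.app q.1 q.2.2)) ''
        (↑(Md (d + 1)) ×ˢ ESet (d + 1)) := by
  apply Set.eq_of_subset_of_subset
  · rintro ⟨s, t⟩ ⟨hs, ht, hcov⟩
    rcases mem_Md_succ.1 hs with ⟨u, hu, rfl⟩ | ⟨a, hA, b, hB, rfl⟩
    · rcases mem_Md_succ.1 ht with ⟨u', hu', rfl⟩ | ⟨a, hA, b, hB, rfl⟩
      · exact Or.inl (Or.inl (Or.inl
          ⟨(u, u'), ⟨hu, hu', cov_of_cov_white hu hcov⟩, rfl⟩))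
      · obtain ⟨rfl, rfl⟩ := cross_of_cov hu hA hB hcov
        exact Or.inl (Or.inl (Or.inr ⟨_, hu, rfl⟩))
    · rcases mem_Md_succ.1 ht with ⟨u', hu', rfl⟩ | ⟨a', hA', b', hB', rfl⟩
      · exact absurd hcov.1.1 (fun h => not_mle_app_M hA hB h)
      · rcases cov_app_inv hA hB hcov with ⟨rfl, hcv⟩ | ⟨rfl, hcv⟩
        · exact Or.inr ⟨(a, (b, b')), ⟨hA, hB, hB', hcv⟩, rfl⟩
        · exact Or.inl (Or.inr ⟨((a, a'), b), ⟨⟨hA, hA', hcv⟩, hB⟩, rfl⟩)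
  · rintro ⟨s, t⟩ (((⟨⟨u, u'⟩, ⟨hu, hu', hcv⟩, he⟩ | ⟨u, hu, he⟩) |
      ⟨⟨⟨c, c'⟩, e⟩, ⟨⟨hc, hc', hcv⟩, heM⟩, he⟩) | ⟨⟨c, e, e'⟩, ⟨hc, he1, he2, hcv⟩, he⟩)
    · cases he
      exact ⟨mem_Md_succ.2 (Or.inl ⟨u, hu, rfl⟩), mem_Md_succ.2 (Or.inl ⟨u', hu', rfl⟩),
        cov_white_of_cov hu hcv⟩
    · cases he
      exact ⟨mem_Md_succ.2 (Or.inl ⟨u, hu, rfl⟩), mem_Md_succ.2 (Or.inr ⟨u, hu, u, hu, rfl⟩),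
        cov_cross hu⟩
    · cases he
      exact ⟨mem_Md_succ.2 (Or.inr ⟨c, hc, e, heM, rfl⟩),
        mem_Md_succ.2 (Or.inr ⟨c', hc', e, heM, rfl⟩), cov_app_left hc heM hcv⟩
    · cases he
      exact ⟨mem_Md_succ.2 (Or.inr ⟨c, hc, e, he1, rfl⟩),
        mem_Md_succ.2 (Or.inr ⟨c, hc, e', he2, rfl⟩), cov_app_right hc he1 hcv⟩

theorem ncard_ESet_succ (d : ℕ) :
    (ESet (d + 2)).ncard =
      (ESet (d + 1)).ncard + (Md (d + 1)).card +
        2 * (ESet (d + 1)).ncard * (Md (d + 1)).card := by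
  have hF : ((fun p : MTerm × MTerm =>
      (MTerm.app MTerm.M p.1, MTerm.app MTerm.M p.2)) '' ESet (d + 1)).Finite :=
    (ESet_finite _).image _
  have hC : ((fun u : MTerm => (MTerm.app MTerm.M u, MTerm.app u u)) '' ↑(Md (d + 1))).Finite :=
    (Md (d + 1)).finite_toSet.image _
  have hG1 : ((fun q : (MTerm × MTerm) × MTerm =>
      (MTerm.app q.1.1 q.2, MTerm.app q.1.2 q.2)) ''
        (ESet (d + 1) ×ˢ ↑(Md (d + 1)))).Finite :=
    ((ESet_finite _).prod (Md (d + 1)).finite_toSet).image _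
  have hG2 : ((fun q : MTerm × MTerm × MTerm =>
      (MTerm.app q.1 q.2.1, MTerm.app q.1 q.2.2)) ''
        ((↑(Md (d + 1)) : Set MTerm) ×ˢ ESet (d + 1))).Finite :=
    ((Md (d + 1)).finite_toSet.prod (ESet_finite _)).image _
  have dFC : Disjoint ((fun p : MTerm × MTerm =>
      (MTerm.app MTerm.M p.1, MTerm.app MTerm.M p.2)) '' ESet (d + 1))
      ((fun u : MTerm => (MTerm.app MTerm.M u, MTerm.app u u)) '' ↑(Md (d + 1))) := by
    rw [Set.disjoint_left]
    rintro p ⟨⟨x, y⟩, _, rfl⟩ ⟨u, hu, he⟩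
    simp only [Prod.mk.injEq, MTerm.app.injEq] at he
    exact ne_M_of_mem hu he.2.1
  have dFCG1 : Disjoint ((fun p : MTerm × MTerm =>
        (MTerm.app MTerm.M p.1, MTerm.app MTerm.M p.2)) '' ESet (d + 1) ∪
      (fun u : MTerm => (MTerm.app MTerm.M u, MTerm.app u u)) '' ↑(Md (d + 1)))
      ((fun q : (MTerm × MTerm) × MTerm =>
        (MTerm.app q.1.1 q.2, MTerm.app q.1.2 q.2)) ''
          (ESet (d + 1) ×ˢ ↑(Md (d + 1)))) := by
    rw [Set.disjoint_left]
    rintro p (⟨⟨x, y⟩, _, rfl⟩ | ⟨u, _, rfl⟩) ⟨⟨⟨c, c'⟩, e⟩, ⟨⟨hc, _, _⟩, _⟩, he⟩ <;>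
    · simp only [Prod.mk.injEq, MTerm.app.injEq] at he
      exact ne_M_of_mem hc he.1.1
  have dG2 : Disjoint (((fun p : MTerm × MTerm =>
        (MTerm.app MTerm.M p.1, MTerm.app MTerm.M p.2)) '' ESet (d + 1) ∪
      (fun u : MTerm => (MTerm.app MTerm.M u, MTerm.app u u)) '' ↑(Md (d + 1))) ∪
      (fun q : (MTerm × MTerm) × MTerm =>
        (MTerm.app q.1.1 q.2, MTerm.app q.1.2 q.2)) ''
          (ESet (d + 1) ×ˢ ↑(Md (d + 1))))
      ((fun q : MTerm × MTerm × MTerm =>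
        (MTerm.app q.1 q.2.1, MTerm.app q.1 q.2.2)) ''
          ((↑(Md (d + 1)) : Set MTerm) ×ˢ ESet (d + 1))) := by
    rw [Set.disjoint_left]
    rintro p ((⟨⟨x, y⟩, _, rfl⟩ | ⟨u, hu, rfl⟩) |
        ⟨⟨⟨c, c'⟩, e⟩, ⟨⟨hc, hc', hcv⟩, _⟩, rfl⟩) ⟨⟨k, m, m'⟩, ⟨hk, _, _, hcv2⟩, he⟩ <;>
      simp only [Prod.mk.injEq, MTerm.app.injEq] at he
    · exact ne_M_of_mem hk he.1.1
    · exact ne_M_of_mem hk he.1.1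
    · exact hcv.1.2 (he.1.1.symm.trans he.2.1)

  have injF : Function.Injective (fun p : MTerm × MTerm =>
      (MTerm.app MTerm.M p.1, MTerm.app MTerm.M p.2)) := by
    rintro ⟨a, b⟩ ⟨c, e⟩ h
    rw [Prod.mk.injEq] at h ⊢
    obtain ⟨h1, h2⟩ := h
    injection h1 with _ g1
    injection h2 with _ g2
    exact ⟨g1, g2⟩
  have injC : Function.Injective (fun u : MTerm => (MTerm.app MTerm.M u, MTerm.app u u)) := by
    intro a c h
    rw [Prod.mk.injEq] at h
    injection h.1
  have injG1 : Function.Injective (fun q : (MTerm × MTerm) × MTerm =>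
      (MTerm.app q.1.1 q.2, MTerm.app q.1.2 q.2)) := by
    rintro ⟨⟨a, a'⟩, b⟩ ⟨⟨c, c'⟩, e⟩ h
    rw [Prod.mk.injEq] at h
    obtain ⟨h1, h2⟩ := h
    injection h1 with g1 g2
    injection h2 with g3 _
    rw [Prod.mk.injEq, Prod.mk.injEq]
    exact ⟨⟨g1, g3⟩, g2⟩
  have injG2 : Function.Injective (fun q : MTerm × MTerm × MTerm =>
      (MTerm.app q.1 q.2.1, MTerm.app q.1 q.2.2)) := by
    rintro ⟨a, b, b'⟩ ⟨c, e, e'⟩ h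
    rw [Prod.mk.injEq] at h
    obtain ⟨h1, h2⟩ := h
    injection h1 with g1 g2
    injection h2 with _ g3
    rw [Prod.mk.injEq, Prod.mk.injEq]
    exact ⟨g1, g2, g3⟩
  rw [ESet_succ_eq]
  rw [Set.ncard_union_eq dG2 ((hF.union hC).union hG1) hG2,
    Set.ncard_union_eq dFCG1 (hF.union hC) hG1,
    Set.ncard_union_eq dFC hF hC,
    Set.ncard_image_of_injective _ injF, Set.ncard_image_of_injective _ injC,
    Set.ncard_image_of_injective _ injG1, Set.ncard_image_of_injective _ injG2,
    ncard_sprod, ncard_sprod]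
  simp only [Set.ncard_coe_finset]
  ring

theorem appPair_inj : Function.Injective (fun p : MTerm × MTerm => MTerm.app p.1 p.2) := by
  rintro ⟨a, b⟩ ⟨c, e⟩ h
  injection h with g1 g2
  rw [Prod.mk.injEq]
  exact ⟨g1, g2⟩

theorem card_Md_succ (d : ℕ) :
    (Md (d + 2)).card = (Md (d + 1)).card + (Md (d + 1)).card ^ 2 := by
  have hdisj : Disjoint ((Md (d + 1)).image (fun u => MTerm.app MTerm.M u))
      (((Md (d + 1)) ×ˢ (Md (d + 1))).image fun p => MTerm.app p.1 p.2) := by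
    rw [Finset.disjoint_left]
    rintro x hx hx2
    obtain ⟨u, _, rfl⟩ := Finset.mem_image.1 hx
    obtain ⟨⟨a, b⟩, hab, he⟩ := Finset.mem_image.1 hx2
    injection he with g _
    exact ne_M_of_mem (Finset.mem_product.1 hab).1 g
  show ((Md (d + 1)).image (fun u => MTerm.app MTerm.M u) ∪
      ((Md (d + 1) ×ˢ Md (d + 1)).image fun p => MTerm.app p.1 p.2)).card = _
  rw [Finset.card_union_of_disjoint hdisj,
    Finset.card_image_of_injective _ (fun a c h => by injection h),
    Finset.card_image_of_injective _ appPair_inj, Finset.card_product, sq]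

theorem Md_one : Md 1 = {MTerm.app MTerm.M MTerm.M} := by decide

theorem ESet_one : ESet 1 = ∅ := by
  ext ⟨s, t⟩
  simp only [ESet, Set.mem_setOf_eq, Set.mem_empty_iff_false, iff_false]
  rintro ⟨hs, ht, hcov⟩
  rw [Md_one, Finset.mem_singleton] at hs ht
  subst hs; subst ht
  exact hcov.1.2 rfl

end MockAux

/-- for `d ≥ 1`, the number of covering pairs (Hasse diagram edges) of the
Mockingbird lattice `M(d)` equals `n (d-1)`, where `g 0 = 1`,
`g h = g (h-1) + g (h-1)^2`, `n 0 = 0`, and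
`n h = n (h-1) + g (h-1) + 2 n (h-1) g (h-1)`. -/
theorem mockingbird_lattice_covering_pairs (g n : ℕ → ℕ) (hg0 : g 0 = 1)
    (hg : ∀ h, 1 ≤ h → g h = g (h - 1) + g (h - 1) ^ 2)
    (hn0 : n 0 = 0)
    (hn : ∀ h, 1 ≤ h → n h = n (h - 1) + g (h - 1) + 2 * n (h - 1) * g (h - 1)) :
    ∀ d, 1 ≤ d →
      Set.ncard {p : MTerm × MTerm |
        MLe (rTerm d) p.1 ∧ MLe (rTerm d) p.2 ∧ MCovBy p.1 p.2} = n (d - 1) := by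
  have hMd : ∀ e, (MockAux.Md (e + 1)).card = g e := by
    intro e
    induction e with
    | zero => rw [hg0, MockAux.Md_one]; rfl
    | succ e ih =>
      rw [MockAux.card_Md_succ, ih, hg (e + 1) (by omega)]
      simp
  have hE : ∀ e, (MockAux.ESet (e + 1)).ncard = n e := by
    intro e
    induction e with
    | zero => rw [MockAux.ESet_one, Set.ncard_empty, hn0]
    | succ e ih =>
      rw [MockAux.ncard_ESet_succ, ih, hMd, hn (e + 1) (by omega)]
      simp
  intro d hd
  obtain ⟨e, rfl⟩ := Nat.exists_eq_add_of_le hd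
  have hset : {p : MTerm × MTerm |
      MLe (rTerm (1 + e)) p.1 ∧ MLe (rTerm (1 + e)) p.2 ∧ MCovBy p.1 p.2} =
      MockAux.ESet (1 + e) := by
    ext p
    simp only [MockAux.ESet, Set.mem_setOf_eq, MockAux.mem_Md_iff]
  rw [hset, add_comm 1 e, hE e]
  congr 1
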